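/- arXiv:math/9611222 — 4 statements merged into one kernel-verified Lean document; each statement's English description precedes it below -/
import Mathlib

section
/- Let A be a commutative real algebra with unit that is formally real and finite dimensional as a real vector space. Then there is a decomposition 1 = e₁ + ... + e_k of the unit into minimal idempotents, and A decomposes as a direct sum A = A₁ ⊕ ... ⊕ A_k where A_i = e_i·A = ℝ·e_i ⊕ N_i with N_i a nilpotent ideal. -/
/-- A commutative real unital algebra is *formally real* if `1 + a₁² + ⋯ + aₙ²`
is invertible for all `a₁, …, aₙ`. -/
def FormallyReal (A : Type*) [CommRing A] [Algebra ℝ A] : Prop :=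
  ∀ (n : ℕ) (a : Fin n → A), IsUnit (1 + ∑ i, (a i) ^ 2)

/-- A nonzero idempotent `e` is *minimal* if for every idempotent `e'` one has
`e * e' = e` or `e * e' = 0`. -/
def MinimalIdempotent (A : Type*) [CommRing A] (e : A) : Prop :=
  e ≠ 0 ∧ IsIdempotentElem e ∧ ∀ e' : A, IsIdempotentElem e' → e * e' = e ∨ e * e' = 0

/-!
A finite dimensional algebra is Artinian, so `A ⧸ nilradical A` is the product of the finitely
many residue fields `A ⧸ 𝔪`. Lifting the unit vectors of this product along the nil kernel gives
complete orthogonal idempotents `e_𝔪` with `e_𝔪 ∉ 𝔪` and `e_𝔪 ∈ 𝔪'` for `𝔪' ≠ 𝔪`. Since an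
idempotent is determined by the prime ideals containing it, each `e_𝔪` is minimal and every
minimal idempotent is one of them. Formal reality rules out `A ⧸ 𝔪 ≅ ℂ`, so `A ⧸ 𝔪 = ℝ` and
`e_𝔪 A = ℝ e_𝔪 ⊕ (𝔪 ∩ e_𝔪 A)`, where the second summand lies in every prime ideal and is
therefore nil.
-/

theorem surjective_algebraMap_of_forall_one_add_sq_ne_zero {K : Type*} [Field K] [Algebra ℝ K]
    [Algebra.IsAlgebraic ℝ K] (h : ∀ x : K, 1 + x ^ 2 ≠ 0) :
    Function.Surjective (algebraMap ℝ K) := by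
  let φ : K →ₐ[ℝ] ℂ := IsAlgClosed.lift
  intro x
  by_cases hx : (φ x).im = 0
  · refine ⟨(φ x).re, φ.toRingHom.injective ?_⟩
    apply Complex.ext <;> simp [hx]
  · -- otherwise `(x - re) / im` would be a square root of `-1`
    set y : K := (φ x).im⁻¹ • (x - algebraMap ℝ K (φ x).re)
    have hy : φ y = Complex.I := by
      apply Complex.ext <;> simp [y, Complex.real_smul, inv_mul_cancel₀ hx]
    refine (h y (φ.toRingHom.injective ?_)).elim
    simp [hy]

theorem FormallyReal.isUnit_one_add_sq {A : Type*} [CommRing A] [Algebra ℝ A]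
    (hA : FormallyReal A) (a : A) : IsUnit (1 + a ^ 2) := by
  simpa using hA 1 ![a]

theorem FormallyReal.surjective_algebraMap_quotient {A : Type*} [CommRing A] [Algebra ℝ A]
    [Algebra.IsIntegral ℝ A] (hA : FormallyReal A) (m : Ideal A) [m.IsMaximal] :
    Function.Surjective (algebraMap ℝ (A ⧸ m)) := by
  let := Ideal.Quotient.field m
  refine surjective_algebraMap_of_forall_one_add_sq_ne_zero fun x hx => ?_
  obtain ⟨a, rfl⟩ := Ideal.Quotient.mk_surjective x
  have := (hA.isUnit_one_add_sq a).map (Ideal.Quotient.mk m)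
  rw [map_add, map_one, map_pow, hx] at this
  exact not_isUnit_zero this

section Idempotents

variable {R : Type*} [CommRing R]

theorem IsIdempotentElem.sub_one_mem_of_notMem {e : R} (he : IsIdempotentElem e) {P : Ideal R}
    [P.IsPrime] (heP : e ∉ P) : e - 1 ∈ P := by
  have : e * (e - 1) ∈ P := by rw [mul_sub, he.eq, mul_one, sub_self]; exact P.zero_mem
  exact (Ideal.IsPrime.mem_or_mem ‹_› this).resolve_left heP

theorem IsIdempotentElem.eq_of_forall_isPrime_mem_iff {x y : R} (hx : IsIdempotentElem x)
    (hy : IsIdempotentElem y) (h : ∀ P : Ideal R, P.IsPrime → (x ∈ P ↔ y ∈ P)) : x = y :=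
  PrimeSpectrum.basicOpen_injOn_isIdempotentElem hx hy <| by
    ext P
    exact (h P.asIdeal P.isPrime).not

theorem minimalIdempotent_of_forall_isPrime_mem_iff {e : R} (he : IsIdempotentElem e)
    {P₀ : Ideal R} [P₀.IsPrime] (hP₀ : ∀ P : Ideal R, P.IsPrime → (e ∈ P ↔ P ≠ P₀)) :
    MinimalIdempotent R e := by
  have he_P₀ : e ∉ P₀ := fun h => (hP₀ P₀ ‹_›).mp h rfl
  refine ⟨fun h => he_P₀ (h ▸ P₀.zero_mem), he, fun f hf => ?_⟩
  by_cases hf_P₀ : f ∈ P₀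
  · right
    refine (he.mul hf).eq_of_forall_isPrime_mem_iff .zero fun P hP => ?_
    simp only [P.zero_mem, iff_true]
    by_cases hPP₀ : P = P₀
    · exact hPP₀ ▸ P₀.mul_mem_left e hf_P₀
    · exact P.mul_mem_right f ((hP₀ P hP).mpr hPP₀)
  · left
    refine (he.mul hf).eq_of_forall_isPrime_mem_iff he fun P hP => ?_
    rw [hP.mul_mem_iff_mem_or_mem, or_iff_left_iff_imp, hP₀ P hP]
    rintro hfP rfl
    exact hf_P₀ hfP

theorem isNilpotent_of_mem_inf_span {e : R} {P₀ : Ideal R}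
    (hP₀ : ∀ P : Ideal R, P.IsPrime → (e ∈ P ↔ P ≠ P₀)) {x : R} (hx : x ∈ P₀ ⊓ Ideal.span {e}) :
    IsNilpotent x := by
  rw [nilpotent_iff_mem_prime]
  intro P hP
  by_cases hPP₀ : P = P₀
  · exact hPP₀ ▸ hx.1
  · exact (Ideal.span_singleton_le_iff_mem P).mpr ((hP₀ P hP).mpr hPP₀) hx.2

theorem MinimalIdempotent.eq_of_mul_ne_zero {e f : R} (he : MinimalIdempotent R e)
    (hf : MinimalIdempotent R f) (h : e * f ≠ 0) : e = f := by
  have hef : e * f = e := (he.2.2 f hf.2.1).resolve_right h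
  have hfe : f * e = f := (hf.2.2 e he.2.1).resolve_right (by rwa [mul_comm])
  rw [← hef, mul_comm, hfe]

theorem OrthogonalIdempotents.injective {ι : Type*} {e : ι → R} (he : OrthogonalIdempotents e)
    (h : ∀ i, e i ≠ 0) : Function.Injective e := by
  intro i j hij
  by_contra hne
  apply h i
  rw [← (he.idem i).eq]
  nth_rewrite 2 [hij]
  exact he.ortho hne

variable {ι : Type*} [Fintype ι] {e : ι → R}

theorem CompleteOrthogonalIdempotents.exists_eq_of_minimalIdempotent
    (he : CompleteOrthogonalIdempotents e) (he_min : ∀ i, MinimalIdempotent R (e i)) {f : R}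
    (hf : MinimalIdempotent R f) : ∃ i, f = e i := by
  obtain ⟨i, hi⟩ : ∃ i, f * e i ≠ 0 := by
    by_contra! h
    apply hf.1
    rw [← mul_one f, ← he.complete, Finset.mul_sum, Finset.sum_eq_zero fun i _ => h i]
  exact ⟨i, hf.eq_of_mul_ne_zero (he_min i) hi⟩

theorem CompleteOrthogonalIdempotents.existsUnique_sum_mem_span
    (he : CompleteOrthogonalIdempotents e) (a : R) :
    ∃! c : ι → R, (∀ i, c i ∈ Ideal.span {e i}) ∧ a = ∑ i, c i := by
  classical
  refine ⟨fun i => e i * a, ⟨fun i => Ideal.mul_mem_right a _ (Ideal.mem_span_singleton_self _),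
    by rw [← Finset.sum_mul, he.complete, one_mul]⟩, ?_⟩
  rintro c ⟨hc, rfl⟩
  choose x hx using fun i => Ideal.mem_span_singleton'.mp (hc i)
  obtain rfl : c = fun i => x i * e i := funext fun i => (hx i).symm
  funext j
  rw [Finset.mul_sum, Finset.sum_eq_single j]
  · rw [mul_left_comm, (he.idem j).eq]
  · intro i _ hij
    rw [mul_left_comm, he.ortho hij.symm, mul_zero]
  · simp

end Idempotents

theorem existsUnique_smul_add_mem_inf_span {K A : Type*} [Field K] [CommRing A] [Algebra K A]
    {P : Ideal A} [P.IsPrime] (hK : Function.Surjective (algebraMap K (A ⧸ P))) {E : A}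
    (hE : E - 1 ∈ P) {a : A} (ha : a ∈ Ideal.span {E}) :
    ∃! p : K × A, p.2 ∈ P ⊓ Ideal.span {E} ∧ a = p.1 • E + p.2 := by
  obtain ⟨r, hr⟩ := hK (Ideal.Quotient.mk P a)
  have hE1 : Ideal.Quotient.mk P E = 1 := by
    rw [← map_one (Ideal.Quotient.mk P)]
    exact Ideal.Quotient.eq.mpr hE
  have hsmul (s : K) : Ideal.Quotient.mk P (s • E) = algebraMap K (A ⧸ P) s := by
    rw [Algebra.smul_def, map_mul, Ideal.Quotient.mk_algebraMap, hE1, mul_one]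
  refine ⟨(r, a - r • E), ⟨⟨?_, ?_⟩, by simp⟩, ?_⟩
  · change a - r • E ∈ P
    rw [← Ideal.Quotient.eq_zero_iff_mem, map_sub, hsmul, hr, sub_self]
  · exact sub_mem ha (Submodule.smul_of_tower_mem _ r (Ideal.mem_span_singleton_self E))
  · rintro ⟨s, n⟩ ⟨⟨hnP, -⟩, rfl⟩
    obtain rfl : s = r := (algebraMap K (A ⧸ P)).injective <| by
      rw [← hsmul, hr, map_add, Ideal.Quotient.eq_zero_iff_mem.mpr hnP, add_zero]
    simp

theorem IsArtinianRing.exists_completeOrthogonalIdempotents_forall_isPrime_mem_iff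
    (R : Type*) [CommRing R] [IsArtinianRing R] :
    ∃ (k : ℕ) (e : Fin k → R) (P : Fin k → Ideal R), CompleteOrthogonalIdempotents e ∧
      (∀ i, (P i).IsMaximal) ∧ ∀ i (Q : Ideal R), Q.IsPrime → (e i ∈ Q ↔ Q ≠ P i) := by
  classical
  have := Fintype.ofFinite (MaximalSpectrum R)
  let φ : R →+* ∀ I : MaximalSpectrum R, R ⧸ I.asIdeal :=
    RingHom.pi fun I => Ideal.Quotient.mk I.asIdeal
  have hφ : Function.Surjective φ := fun v => by
    obtain ⟨x, hx⟩ := Ideal.Quotient.mk_surjective ((quotNilradicalEquivPi R).symm v)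
    exact ⟨x, by rw [← (quotNilradicalEquivPi R).apply_symm_apply v, ← hx]; rfl⟩
  have hker : ∀ x ∈ RingHom.ker φ, IsNilpotent x := fun x hx => by
    rw [← mem_nilradical, nilradical_eq_iInf, Submodule.mem_iInf]
    exact fun I => Ideal.Quotient.eq_zero_iff_mem.mp (congr_fun hx I)
  obtain ⟨e, he, hφe⟩ := (CompleteOrthogonalIdempotents.single fun I : MaximalSpectrum R =>
    R ⧸ I.asIdeal).lift_of_isNilpotent_ker φ hker fun _ => hφ _
  let σ := (Fintype.equivFin (MaximalSpectrum R)).symm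
  refine ⟨_, e ∘ σ, fun i => (σ i).asIdeal, (CompleteOrthogonalIdempotents.equiv σ).mpr he,
    fun i => (σ i).isMaximal, fun i Q hQ => ?_⟩
  obtain ⟨J, rfl⟩ : ∃ J : MaximalSpectrum R, J.asIdeal = Q :=
    ⟨⟨Q, (isPrime_iff_isMaximal Q).mp hQ⟩, rfl⟩
  have hJ : φ (e (σ i)) J =
      Pi.single (M := fun I : MaximalSpectrum R => R ⧸ I.asIdeal) (σ i) 1 J :=
    congr_fun (congr_fun hφe (σ i)) J
  rw [Function.comp_apply, ← Ideal.Quotient.eq_zero_iff_mem, Ne, ← MaximalSpectrum.ext_iff]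
  change φ (e (σ i)) J = 0 ↔ _
  rw [hJ]
  by_cases h : J = σ i
  · subst h
    simp
  · simp [h]

/-- A formally real, finite dimensional commutative unital real algebra admits a
decomposition `1 = e₁ + ⋯ + e_k` into all the minimal idempotents, and
`A = A₁ ⊕ ⋯ ⊕ A_k` where `A_i = e_i·A = ℝ·e_i ⊕ N_i` with `N_i` a nilpotent ideal. -/
theorem formallyReal_decomposition
    {A : Type*} [CommRing A] [Algebra ℝ A] [FiniteDimensional ℝ A]
    (hA : FormallyReal A) :
    ∃ (k : ℕ) (e : Fin k → A),
      Function.Injective e ∧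
      (∀ i, MinimalIdempotent A (e i)) ∧
      (∀ f : A, MinimalIdempotent A f → ∃ i, f = e i) ∧
      (∑ i, e i) = 1 ∧
      (∀ a : A, ∃! c : Fin k → A,
        (∀ i, c i ∈ Ideal.span ({e i} : Set A)) ∧ a = ∑ i, c i) ∧
      (∀ i, ∃ N : Ideal A, (↑N : Set A) ⊆ Ideal.span ({e i} : Set A) ∧
        (∀ x ∈ N, IsNilpotent x) ∧
        ∀ a ∈ Ideal.span ({e i} : Set A),
          ∃! p : ℝ × A, p.2 ∈ N ∧ a = p.1 • e i + p.2) := by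
  have : IsArtinianRing A := .of_finite ℝ A
  obtain ⟨k, e, P, he, hP, he_mem⟩ :=
    IsArtinianRing.exists_completeOrthogonalIdempotents_forall_isPrime_mem_iff A
  have he_min (i : Fin k) : MinimalIdempotent A (e i) :=
    have := (hP i).isPrime
    minimalIdempotent_of_forall_isPrime_mem_iff (he.idem i) (he_mem i)
  refine ⟨k, e, he.injective fun i => (he_min i).1, he_min,
    fun f hf => he.exists_eq_of_minimalIdempotent he_min hf, he.complete,
    he.existsUnique_sum_mem_span, fun i => ⟨P i ⊓ Ideal.span {e i}, fun x hx => hx.2,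
    fun x hx => isNilpotent_of_mem_inf_span (he_mem i) hx, fun a ha => ?_⟩⟩
  have := hP i
  have he_P : e i ∉ P i := fun h => (he_mem i (P i) inferInstance).mp h rfl
  exact existsUnique_smul_add_mem_inf_span (hA.surjective_algebraMap_quotient (P i))
    ((he.idem i).sub_one_mem_of_notMem he_P) ha
end

section
/- Every formally real, finite dimensional unital commutative real algebra is the direct sum of finitely many Weil algebras. -/
/-- A *Weil algebra* is a real commutative unital algebra of the form
`ℝ·1 ⊕ N`, where `N` is a finite dimensional ideal of nilpotent elements. -/
def IsWeilAlgebra (A : Type*) [CommRing A] [Algebra ℝ A] : Prop :=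
  ∃ N : Ideal A, (∀ x ∈ N, IsNilpotent x) ∧ FiniteDimensional ℝ N ∧
    ∀ a : A, ∃! p : ℝ × N, a = algebraMap ℝ A p.1 + (p.2 : A)

/-!
A finite-dimensional real algebra `A` is Artinian, so its nilradical is nilpotent, say
`nilradical A ^ n = 0`, and the Chinese remainder theorem splits `A` as the product of the
`A ⧸ 𝔪 ^ n` over its finitely many maximal ideals `𝔪`. Each residue field `A ⧸ 𝔪` is a finite
formally real extension of `ℝ`, hence `ℝ` itself, which gives an augmentation `A ⧸ 𝔪 ^ n → ℝ`
whose kernel `𝔪 ⧸ 𝔪 ^ n` is nilpotent: this is the Weil algebra structure.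
-/

open Module

theorem FormallyReal.of_surjective {A B : Type*} [CommRing A] [Algebra ℝ A] [CommRing B]
    [Algebra ℝ B] (hA : FormallyReal A) (f : A →ₐ[ℝ] B) (hf : Function.Surjective f) :
    FormallyReal B := by
  intro n b
  choose a ha using fun i => hf (b i)
  simpa [ha] using (hA n a).map f

theorem FormallyReal.algebraMap_surjective {K : Type*} [Field K] [Algebra ℝ K]
    [FiniteDimensional ℝ K] (hK : FormallyReal K) : Function.Surjective (algebraMap ℝ K) := by
  have : Algebra.IsAlgebraic ℝ K := Algebra.IsAlgebraic.of_finite ℝ K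
  -- `K` embeds into `ℂ`, and it cannot be all of `ℂ` because `1 + i² = 0` there.
  let φ : K →ₐ[ℝ] ℂ := IsAlgClosed.lift
  have hφ : Function.Injective φ := φ.toRingHom.injective
  have hle : finrank ℝ K ≤ 2 := by
    simpa using LinearMap.finrank_le_finrank_of_injective (f := φ.toLinearMap) hφ
  have hpos : 0 < finrank ℝ K := finrank_pos
  obtain h1 | h2 : finrank ℝ K = 1 ∨ finrank ℝ K = 2 := by omega
  · intro x
    exact Algebra.mem_bot.1 (Subalgebra.bot_eq_top_of_finrank_eq_one h1 ▸ Algebra.mem_top)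
  · have hsurj : Function.Surjective φ.toLinearMap :=
      (LinearMap.injective_iff_surjective_of_finrank_eq_finrank (by simp [h2])).1 hφ
    obtain ⟨x, hx⟩ := hsurj Complex.I
    have hx0 : (1 : K) + x ^ 2 = 0 := hφ (by simp [show φ x = Complex.I from hx])
    simpa [hx0] using hK 1 ![x]

theorem FormallyReal.exists_algHom_ker_eq {A : Type*} [CommRing A] [Algebra ℝ A]
    [FiniteDimensional ℝ A] (hA : FormallyReal A) (I : Ideal A) [I.IsMaximal] :
    ∃ φ : A →ₐ[ℝ] ℝ, RingHom.ker φ = I := by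
  let _ := Ideal.Quotient.field I
  have hsurj : Function.Surjective (algebraMap ℝ (A ⧸ I)) :=
    (hA.of_surjective (Ideal.Quotient.mkₐ ℝ I) Ideal.Quotient.mk_surjective).algebraMap_surjective
  let e : ℝ ≃ₐ[ℝ] A ⧸ I :=
    AlgEquiv.ofBijective (Algebra.ofId ℝ _) ⟨(algebraMap ℝ _).injective, hsurj⟩
  refine ⟨e.symm.toAlgHom.comp (Ideal.Quotient.mkₐ ℝ I), ?_⟩
  ext a
  simp [Ideal.Quotient.eq_zero_iff_mem]

theorem isWeilAlgebra_of_isNilpotent_ker {B : Type*} [CommRing B] [Algebra ℝ B]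
    [FiniteDimensional ℝ B] (φ : B →ₐ[ℝ] ℝ) (hφ : ∀ x ∈ RingHom.ker φ, IsNilpotent x) :
    IsWeilAlgebra B := by
  refine ⟨RingHom.ker φ, hφ, inferInstance, fun a => ?_⟩
  have hmem : a - algebraMap ℝ B (φ a) ∈ RingHom.ker φ := by simp
  refine ⟨(φ a, ⟨_, hmem⟩), by simp, ?_⟩
  rintro ⟨r, x, hx⟩ rfl
  have hr : φ (algebraMap ℝ B r + x) = r := by simpa using hx
  simp [hr]

theorem isWeilAlgebra_quotient_ker_pow {A : Type*} [CommRing A] [Algebra ℝ A]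
    [FiniteDimensional ℝ A] (φ : A →ₐ[ℝ] ℝ) {n : ℕ} (hn : n ≠ 0) :
    IsWeilAlgebra (A ⧸ RingHom.ker φ ^ n) := by
  refine isWeilAlgebra_of_isNilpotent_ker
    (Ideal.Quotient.liftₐ _ φ fun a ha => Ideal.pow_le_self hn ha) fun x hx => ?_
  obtain ⟨a, rfl⟩ := Ideal.Quotient.mk_surjective x
  refine ⟨n, ?_⟩
  rw [← map_pow, Ideal.Quotient.eq_zero_iff_mem]
  exact Ideal.pow_mem_pow (show a ∈ RingHom.ker φ from hx) n

/-- Every formally real, finite dimensional unital commutative real algebra is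
the direct sum (product) of finitely many Weil algebras. -/
theorem formallyReal_directSum_of_weilAlgebras
    {A : Type} [CommRing A] [Algebra ℝ A] [FiniteDimensional ℝ A]
    (hA : FormallyReal A) :
    ∃ (k : ℕ) (B : Fin k → Type) (cr : ∀ i, CommRing (B i))
      (alg : ∀ i, Algebra ℝ (B i)),
      (∀ i, IsWeilAlgebra (B i)) ∧ Nonempty (A ≃ₐ[ℝ] ((i : Fin k) → B i)) := by
  have : IsArtinianRing A := isArtinian_of_tower ℝ inferInstance
  obtain ⟨n, hn⟩ := IsArtinianRing.isNilpotent_nilradical (R := A)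
  -- exponent `n + 1` rather than `n`: for `n = 0` the factors `A ⧸ 𝔪 ^ 0` would be zero rings
  have hbot : nilradical A ^ (n + 1) = ⊥ := by rw [pow_succ, hn, Ideal.zero_eq_bot, Ideal.bot_mul]
  have hB : ∀ 𝔪 : MaximalSpectrum A, IsWeilAlgebra (A ⧸ 𝔪.asIdeal ^ (n + 1)) := fun 𝔪 => by
    obtain ⟨φ, hφ⟩ := hA.exists_algHom_ker_eq 𝔪.asIdeal
    exact hφ ▸ isWeilAlgebra_quotient_ker_pow φ n.succ_ne_zero
  let split : A ≃ₐ[ℝ] ∀ 𝔪 : MaximalSpectrum A, A ⧸ 𝔪.asIdeal ^ (n + 1) :=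
    ((AlgEquiv.quotientBot ℝ A).symm.trans (Ideal.quotientEquivAlgOfEq ℝ hbot.symm)).trans
      ((IsArtinianRing.quotNilradicalPowEquivPi A (n + 1)).restrictScalars ℝ)
  let B : MaximalSpectrum A → Type := fun 𝔪 => A ⧸ 𝔪.asIdeal ^ (n + 1)
  let e := Finite.equivFin (MaximalSpectrum A)
  exact ⟨_, fun i => B (e.symm i), fun _ => inferInstance, fun _ => inferInstance,
    fun i => hB (e.symm i),
    ⟨split.trans (AlgEquiv.piCongrLeft ℝ B e.symm).symm⟩⟩
end

section
/- Let A = ℝ·1 ⊕ N be a Weil algebra. The extension T_A(f)(λ·1+n) = Σ_j (f^{(j)}(λ)/j!)·n^j applied to the multiplication map m(x,y) = xy recovers the algebra multiplication of A, applied to addition recovers the addition, and applied to scalar multiplication by t recovers multiplication by t·1. In particular the Weil algebra A can be recovered from the functor T_A evaluated at ℝ. -/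
/-!
Multiplication, addition and `x ↦ t * x` are affine in each variable, so all their derivatives of
order `≥ 2` vanish and the Taylor expansion at `(p a, p b)` stops at first order; the first-order
terms reassemble `a = p a + (a - p a)`. Truncating at order `k = 1` drops the first-order terms
too, but then nilpotency of order one forces `a = p a`.
-/

/-- Taylor-expansion extension of a one-variable function to a Weil algebra. -/
noncomputable def TA {A : Type*} [CommRing A] [Algebra ℝ A]
    (p : A →ₐ[ℝ] ℝ) (k : ℕ) (f : ℝ → ℝ) (a : A) : A :=
  ∑ j ∈ Finset.range k,
    (iteratedDeriv j f (p a) / (Nat.factorial j : ℝ)) •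
      (a - algebraMap ℝ A (p a)) ^ j

/-- Taylor-expansion extension of a two-variable function to a Weil algebra. -/
noncomputable def TA2 {A : Type*} [CommRing A] [Algebra ℝ A]
    (p : A →ₐ[ℝ] ℝ) (k : ℕ) (f : ℝ → ℝ → ℝ) (a b : A) : A :=
  ∑ i ∈ Finset.range k, ∑ j ∈ Finset.range k,
    ((iteratedDeriv i (fun x => iteratedDeriv j (fun y => f x y) (p b)) (p a)) /
        ((Nat.factorial i : ℝ) * (Nat.factorial j : ℝ))) •
      ((a - algebraMap ℝ A (p a)) ^ i * (b - algebraMap ℝ A (p b)) ^ j)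

theorem iteratedDeriv_affine (c d x : ℝ) (n : ℕ) :
    iteratedDeriv n (fun x => c * x + d) x =
      if n = 0 then c * x + d else if n = 1 then c else 0 := by
  obtain _ | _ | n := n <;> simp [iteratedDeriv_succ', iteratedDeriv_const]

section TruncatedSums

variable {R A : Type*} {k : ℕ}

theorem sum_range_smul_pow_eq_of_coeff_eq_zero [Semiring R] [Semiring A] [Module R A]
    (hk : 1 ≤ k) {x : A} (hx : x ^ k = 0) {c : ℕ → R} (hc : ∀ j, 2 ≤ j → c j = 0) :
    ∑ j ∈ Finset.range k, c j • x ^ j = c 0 • 1 + c 1 • x := by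
  obtain rfl | hk2 := hk.eq_or_lt
  · rw [pow_one] at hx
    simp [hx]
  · rw [← Finset.sum_range_add_sum_Ico _ hk2,
      Finset.sum_eq_zero (s := Finset.Ico 2 k) fun j hj => by
        rw [hc j (Finset.mem_Ico.1 hj).1, zero_smul]]
    simp [Finset.sum_range_succ]

theorem sum_range_sum_range_smul_pow_mul_pow_eq_of_coeff_eq_zero
    [CommSemiring R] [Semiring A] [Algebra R A]
    (hk : 1 ≤ k) {x y : A} (hx : x ^ k = 0) (hy : y ^ k = 0) {c : ℕ → ℕ → R}
    (hc : ∀ i j, 2 ≤ i ∨ 2 ≤ j → c i j = 0) :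
    ∑ i ∈ Finset.range k, ∑ j ∈ Finset.range k, c i j • (x ^ i * y ^ j) =
      c 0 0 • 1 + c 1 0 • x + c 0 1 • y + c 1 1 • (x * y) := by
  have row_sum (i : ℕ) :
      ∑ j ∈ Finset.range k, c i j • (x ^ i * y ^ j) = c i 0 • x ^ i + c i 1 • x ^ i * y := by
    simp_rw [← mul_smul_comm, ← Finset.mul_sum,
      sum_range_smul_pow_eq_of_coeff_eq_zero hk hy fun j hj => hc i j (.inr hj)]
    simp [mul_add]
  simp_rw [row_sum, Finset.sum_add_distrib, ← Finset.sum_mul,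
    sum_range_smul_pow_eq_of_coeff_eq_zero hk hx fun i hi => hc i 0 (.inl hi),
    sum_range_smul_pow_eq_of_coeff_eq_zero hk hx fun i hi => hc i 1 (.inl hi)]
  simp only [add_mul, smul_mul_assoc, one_mul]
  abel

end TruncatedSums

section TaylorExtension

variable {A : Type*} [CommRing A] [Algebra ℝ A] (p : A →ₐ[ℝ] ℝ) {k : ℕ}

theorem TA_affine (hk : 1 ≤ k) {a : A} (ha : (a - algebraMap ℝ A (p a)) ^ k = 0) (c d : ℝ) :
    TA p k (fun x => c * x + d) a = c • a + algebraMap ℝ A d := by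
  rw [TA, sum_range_smul_pow_eq_of_coeff_eq_zero hk ha fun j hj => by
    simp [iteratedDeriv_affine, show j ≠ 0 by omega, show j ≠ 1 by omega]]
  simp only [iteratedDeriv_affine, ↓reduceIte, Nat.factorial_zero, Nat.factorial_one,
    Nat.cast_one, div_one, one_ne_zero, Algebra.smul_def, map_add, map_mul, mul_one]
  ring

theorem TA2_multiaffine (hk : 1 ≤ k) {a b : A} (ha : (a - algebraMap ℝ A (p a)) ^ k = 0)
    (hb : (b - algebraMap ℝ A (p b)) ^ k = 0) (α β γ δ : ℝ) :
    TA2 p k (fun x y => α * x * y + β * x + γ * y + δ) a b =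
      α • (a * b) + β • a + γ • b + algebraMap ℝ A δ := by
  have inner_deriv (x : ℝ) (j : ℕ) :
      iteratedDeriv j (fun y => α * x * y + β * x + γ * y + δ) (p b) =
        if j = 0 then (α * p b + β) * x + (γ * p b + δ) else if j = 1 then α * x + γ else 0 := by
    have h_affine : (fun y => α * x * y + β * x + γ * y + δ) = fun y => (α * x + γ) * y + (β * x + δ) := by
      ext; ring
    rw [h_affine, iteratedDeriv_affine]
    split_ifs <;> ring
  rw [TA2]
  simp_rw [inner_deriv]
  rw [sum_range_sum_range_smul_pow_mul_pow_eq_of_coeff_eq_zero hk ha hb fun i j hij => ?_]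
  · simp only [iteratedDeriv_affine, ↓reduceIte, Nat.factorial_zero, Nat.factorial_one,
      Nat.cast_one, div_one, one_ne_zero, Algebra.smul_def, map_add, map_mul, mul_one]
    ring
  · rcases hij with hi | hj
    · obtain _ | _ | j := j <;>
        simp [iteratedDeriv_affine, show i ≠ 0 by omega, show i ≠ 1 by omega]
    · simp [show j ≠ 0 by omega, show j ≠ 1 by omega]

end TaylorExtension

theorem TA_recovers_algebra_structure_general {A : Type*} [CommRing A] [Algebra ℝ A]
    (p : A →ₐ[ℝ] ℝ) (k : ℕ) (hk1 : 1 ≤ k)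
    (hk : ∀ a : A, (a - algebraMap ℝ A (p a)) ^ k = 0) :
    (∀ a b : A, TA2 p k (fun x y => x * y) a b = a * b) ∧
    (∀ a b : A, TA2 p k (fun x y => x + y) a b = a + b) ∧
    (∀ (t : ℝ) (a : A), TA p k (fun x => t * x) a = algebraMap ℝ A t * a) := by
  refine ⟨fun a b => ?_, fun a b => ?_, fun t a => ?_⟩
  · simpa using TA2_multiaffine p hk1 (hk a) (hk b) 1 0 0 0
  · simpa using TA2_multiaffine p hk1 (hk a) (hk b) 0 1 1 0
  · simpa [Algebra.smul_def] using TA_affine p hk1 (hk a) t 0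

/-- The Taylor-expansion extension applied to the multiplication map recovers
the multiplication of the Weil algebra `A`, applied to addition recovers the
addition, and applied to scalar multiplication by `t` recovers multiplication
by `t·1`.  In particular `A` is recovered from the functor `T_A` at `ℝ`. -/
theorem TA_recovers_algebra_structure {A : Type*} [CommRing A] [Algebra ℝ A]
    [FiniteDimensional ℝ A]
    (p : A →ₐ[ℝ] ℝ) (k : ℕ) (hk1 : 1 ≤ k)
    (hk : ∀ a : A, (a - algebraMap ℝ A (p a)) ^ k = 0) :
    (∀ a b : A, TA2 p k (fun x y => x * y) a b = a * b) ∧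
    (∀ a b : A, TA2 p k (fun x y => x + y) a b = a + b) ∧
    (∀ (t : ℝ) (a : A), TA p k (fun x => t * x) a = algebraMap ℝ A t * a) :=
  TA_recovers_algebra_structure_general p k hk1 hk
end

section
/- Let φ : A → B be a unital algebra homomorphism between Weil algebras. Then for every smooth f : ℝ → ℝ, φ ∘ T_A(f) = T_B(f) ∘ φ, where T_A(f) and T_B(f) are the Taylor-expansion extensions of f to A and B respectively. -/
/-- A unital algebra homomorphism `φ : A → B` between Weil algebras intertwines
the Taylor-expansion extensions: `φ ∘ T_A(f) = T_B(f) ∘ φ` for every smooth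
`f : ℝ → ℝ`. -/
theorem algHom_intertwines_TA
    {A B : Type*} [CommRing A] [Algebra ℝ A] [CommRing B] [Algebra ℝ B]
    [FiniteDimensional ℝ A] [FiniteDimensional ℝ B]
    (pA : A →ₐ[ℝ] ℝ) (kA : ℕ)
    (hkA : ∀ a : A, (a - algebraMap ℝ A (pA a)) ^ kA = 0)
    (pB : B →ₐ[ℝ] ℝ) (kB : ℕ)
    (hkB : ∀ b : B, (b - algebraMap ℝ B (pB b)) ^ kB = 0)
    (φ : A →ₐ[ℝ] B)
    (f : ℝ → ℝ) (hf : ContDiff ℝ (⊤ : ℕ∞) f) :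
    ∀ a : A, φ (TA pA kA f a) = TA pB kB f (φ a) := by
  intro a
  set n : A := a - algebraMap ℝ A (pA a) with hn
  have hkA1 : 1 ≤ kA := by
    rcases Nat.eq_zero_or_pos kA with h | h
    · exfalso
      have := congrArg pA (hkA a)
      simp [h] at this
    · exact h
  have hφn : φ n = φ a - algebraMap ℝ B (pA a) := by
    simp [hn, AlgHom.commutes]
  have hnilA : (φ n) ^ kA = 0 := by rw [← map_pow, hkA a, map_zero]
  have hpB : pB (φ a) = pA a := by
    have h2 : (pB (φ n)) ^ kA = 0 := by rw [← map_pow, hnilA, map_zero]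
    have h3 : pB (φ n) = 0 := by
      exact pow_eq_zero_iff (Nat.one_le_iff_ne_zero.mp hkA1) |>.mp h2
    rw [hφn] at h3
    simp at h3
    linarith
  have hφnB : φ n = φ a - algebraMap ℝ B (pB (φ a)) := by rw [hφn, hpB]
  have hnilB : (φ n) ^ kB = 0 := by rw [hφnB]; exact hkB (φ a)
  unfold TA
  rw [map_sum, hpB, ← hn, ← hφn]
  simp_rw [map_smul, map_pow]
  set c : ℕ → ℝ := fun j => iteratedDeriv j f (pA a) / (Nat.factorial j : ℝ) with hc
  have hL : ∑ j ∈ Finset.range kA, c j • (φ n) ^ j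
      = ∑ j ∈ Finset.range (max kA kB), c j • (φ n) ^ j := by
    apply Finset.sum_subset
    · exact Finset.range_subset_range.mpr (le_max_left _ _)
    · intro j _ hj
      simp only [Finset.mem_range, not_lt] at hj
      rw [pow_eq_zero_of_le hj hnilA, smul_zero]
  have hR : ∑ j ∈ Finset.range kB, c j • (φ n) ^ j
      = ∑ j ∈ Finset.range (max kA kB), c j • (φ n) ^ j := by
    apply Finset.sum_subset
    · exact Finset.range_subset_range.mpr (le_max_right _ _)
    · intro j _ hj
      simp only [Finset.mem_range, not_lt] at hj
      rw [pow_eq_zero_of_le hj hnilB, smul_zero]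
  rw [hL, hR]
end
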